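/- For every u₁ > 0 and every k with 2 ≤ k ≤ n, the derivative with respect to u₁ of the function u₁ ↦ g₁(U_k(u₁))/g₁(U₁(u₁)) is strictly positive. -/

import Mathlib

open Finset

noncomputable def U (g1 : ℝ → ℝ) (h : ℝ) : ℕ → ℝ → ℝ
  | 0, u => u
  | 1, u => u
  | 2, u => u + h ^ 2 / 2 * g1 u
  | k + 3, u => 2 * U g1 h (k + 2) u - U g1 h (k + 1) u + h ^ 2 * g1 (U g1 h (k + 2) u)

/-!
Write `U'ₖ` for `∂Uₖ/∂u` (`dU`) and, at a fixed `u > 0`,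
`Gₖ := (U'ₖ - 1) g(u) - g'(u) (Uₖ - u)` (`excess`).
The numerator of the derivative of `g(Uₖ)/g(u)` is `Nₖ := g'(Uₖ) U'ₖ g(u) - g'(u) g(Uₖ)`, and
the recursions for `Uₖ` and `U'ₖ` give `Gₖ₊₁ - 2Gₖ + Gₖ₋₁ = h² Nₖ`.
On the other hand convexity of `g` shows that `Gₖ ≥ 0` and `Uₖ > u` force `Nₖ > 0`.
Since `G₁ = G₂ = 0` and `Uₖ` increases strictly, an induction keeps `Gₖ` nonnegative and
nondecreasing, so every `Nₖ` with `k ≥ 2` is positive.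
-/

open Set

noncomputable def dU (g : ℝ → ℝ) (h : ℝ) : ℕ → ℝ → ℝ
  | 0, _ => 1
  | 1, _ => 1
  | 2, u => 1 + h ^ 2 / 2 * deriv g u
  | k + 3, u =>
    2 * dU g h (k + 2) u - dU g h (k + 1) u + h ^ 2 * (deriv g (U g h (k + 2) u) * dU g h (k + 2) u)

theorem hasDerivAt_U {g : ℝ → ℝ} (hg : Differentiable ℝ g) (h : ℝ) :
    ∀ k u, HasDerivAt (U g h k) (dU g h k u) u
  | 0, u => hasDerivAt_id' u
  | 1, u => hasDerivAt_id' u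
  | 2, u => (hasDerivAt_id' u).add ((hg u).hasDerivAt.const_mul _)
  | k + 3, u =>
    (((hasDerivAt_U hg h (k + 2) u).const_mul 2).sub (hasDerivAt_U hg h (k + 1) u)).add
      (((hg _).hasDerivAt.comp u (hasDerivAt_U hg h (k + 2) u)).const_mul _)

theorem deriv_mul_sub_deriv_mul_pos {g : ℝ → ℝ} {u y d : ℝ} (hg : ContinuousOn g (Icc u y))
    (hg' : StrictMonoOn (deriv g) (Icc u y)) (huy : u < y) (hgu : 0 < g u)
    (hg'u : 0 ≤ deriv g u) (hd : deriv g u * (y - u) ≤ (d - 1) * g u) :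
    0 < deriv g y * d * g u - deriv g u * g y := by
  have hy : y ∈ Icc u y := right_mem_Icc.2 huy.le
  have hg'uy : deriv g u < deriv g y := hg' (left_mem_Icc.2 huy.le) hy huy
  have hchord : g y - g u ≤ deriv g y * (y - u) := by
    obtain ⟨a, ha, hslope⟩ := hg'.mono Ioo_subset_Icc_self |>.exists_slope_lt_deriv hg huy
    have := hslope.trans (hg' (Ioo_subset_Icc_self ha) hy ha.2)
    rw [div_lt_iff₀ (sub_pos.2 huy)] at this
    exact this.le
  nlinarith [mul_le_mul_of_nonneg_left hd (hg'u.trans hg'uy.le),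
    mul_le_mul_of_nonneg_left hchord hg'u, mul_pos hgu (sub_pos.2 hg'uy)]

theorem le_U_and_U_lt_U_succ {g : ℝ → ℝ} {h u : ℝ} (hh : h ≠ 0) (hu : 0 < u)
    (hg : ∀ x > 0, 0 < g x) : ∀ m, u ≤ U g h (m + 1) u ∧ U g h (m + 1) u < U g h (m + 2) u
  | 0 => ⟨le_rfl, lt_add_of_pos_right _ (by have := hg u hu; positivity)⟩
  | m + 1 => by
    obtain ⟨hle, hlt⟩ := le_U_and_U_lt_U_succ hh hu hg m
    have hpos : 0 < h ^ 2 * g (U g h (m + 2) u) := by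
      have := hg _ (hu.trans_le (hle.trans hlt.le)); positivity
    exact ⟨hle.trans hlt.le, by simp only [U]; linarith⟩

theorem lt_U {g : ℝ → ℝ} {h u : ℝ} (hh : h ≠ 0) (hu : 0 < u) (hg : ∀ x > 0, 0 < g x) (m : ℕ) :
    u < U g h (m + 2) u :=
  (le_U_and_U_lt_U_succ hh hu hg m).1.trans_lt (le_U_and_U_lt_U_succ hh hu hg m).2

noncomputable def excess (g : ℝ → ℝ) (h : ℝ) (k : ℕ) (u : ℝ) : ℝ :=
  (dU g h k u - 1) * g u - deriv g u * (U g h k u - u)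

theorem excess_add_three (g : ℝ → ℝ) (h : ℝ) (k : ℕ) (u : ℝ) :
    excess g h (k + 3) u - excess g h (k + 2) u = excess g h (k + 2) u - excess g h (k + 1) u +
      h ^ 2 * (deriv g (U g h (k + 2) u) * dU g h (k + 2) u * g u -
        deriv g u * g (U g h (k + 2) u)) := by
  simp only [excess, U, dU]
  ring

theorem numerator_pos_of_excess_nonneg {g : ℝ → ℝ} {h u : ℝ} (hg : Continuous g)
    (hg' : StrictMonoOn (deriv g) (Ici u)) (hgu : 0 < g u) (hg'u : 0 ≤ deriv g u) {m : ℕ}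
    (hU : u < U g h (m + 2) u) (hG : 0 ≤ excess g h (m + 2) u) :
    0 < deriv g (U g h (m + 2) u) * dU g h (m + 2) u * g u - deriv g u * g (U g h (m + 2) u) :=
  deriv_mul_sub_deriv_mul_pos hg.continuousOn (hg'.mono Icc_subset_Ici_self) hU hgu hg'u
    (by unfold excess at hG; linarith)

theorem excess_nonneg_and_monotone {g : ℝ → ℝ} {h u : ℝ} (hg : Continuous g)
    (hg' : StrictMonoOn (deriv g) (Ici u)) (hgu : 0 < g u) (hg'u : 0 ≤ deriv g u)
    (hU : ∀ m, u < U g h (m + 2) u) :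
    ∀ m, 0 ≤ excess g h (m + 1) u ∧ excess g h (m + 1) u ≤ excess g h (m + 2) u
  | 0 => by simp only [excess, U, dU]; constructor <;> linarith
  | m + 1 => by
    obtain ⟨hnonneg, hmono⟩ := excess_nonneg_and_monotone hg hg' hgu hg'u hU m
    have hN := numerator_pos_of_excess_nonneg hg hg' hgu hg'u (hU m) (hnonneg.trans hmono)
    have := excess_add_three g h m u
    exact ⟨hnonneg.trans hmono, by linarith [mul_nonneg (sq_nonneg h) hN.le]⟩

theorem stmt8_general
    (g1 : ℝ → ℝ)
    (hg1C : ContDiff ℝ 3 g1)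
    (hg10 : g1 0 = 0)
    (hg1d1 : ∀ x > 0, 0 < deriv g1 x)
    (hg1d2 : ∀ x > 0, 0 < iteratedDeriv 2 g1 x)
    (n : ℕ) (hn : 2 ≤ n) (h : ℝ) (hh : h = 1 / ((n : ℝ) - 1))
    (u1 : ℝ) (hu1 : 0 < u1) (k : ℕ) (hk2 : 2 ≤ k) :
    0 < deriv (fun x => g1 (U g1 h k x) / g1 (U g1 h 1 x)) u1 := by
  have hdiff : Differentiable ℝ g1 := hg1C.differentiable (by norm_num)
  have hg1_pos : ∀ x > 0, 0 < g1 x := fun x hx => hg10 ▸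
    strictMonoOn_of_deriv_pos (convex_Ici 0) hg1C.continuous.continuousOn
      (by simpa only [interior_Ici]) self_mem_Ici (le_of_lt hx) hx
  have hderiv_mono : StrictMonoOn (deriv g1) (Ici u1) :=
    strictMonoOn_of_deriv_pos (convex_Ici u1) (hg1C.continuous_deriv (by norm_num)).continuousOn
      fun x hx => by
        rw [interior_Ici] at hx
        simpa only [iteratedDeriv_succ, iteratedDeriv_zero] using hg1d2 x (hu1.trans hx)
  have hh0 : h ≠ 0 := by
    have : (2 : ℝ) ≤ n := by exact_mod_cast hn
    rw [hh]; exact one_div_ne_zero (by linarith)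
  have hU := lt_U hh0 hu1 hg1_pos
  have hexcess := excess_nonneg_and_monotone hg1C.continuous hderiv_mono (hg1_pos u1 hu1)
    (hg1d1 u1 hu1).le hU
  obtain ⟨m, rfl⟩ : ∃ m, k = m + 2 := ⟨k - 2, by omega⟩
  have hquot : HasDerivAt (fun x => g1 (U g1 h (m + 2) x) / g1 (U g1 h 1 x)) _ u1 :=
    ((hdiff _).hasDerivAt.comp u1 (hasDerivAt_U hdiff h (m + 2) u1)).div
      ((hdiff _).hasDerivAt.comp u1 (hasDerivAt_U hdiff h 1 u1)) (hg1_pos u1 hu1).ne'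
  rw [hquot.deriv]
  have hN := numerator_pos_of_excess_nonneg hg1C.continuous hderiv_mono (hg1_pos u1 hu1)
    (hg1d1 u1 hu1).le (hU m) (hexcess (m + 1)).1
  refine div_pos ?_ (pow_pos (hg1_pos u1 hu1) 2)
  change 0 < _ * _ * g1 u1 - g1 (U g1 h (m + 2) u1) * (deriv g1 u1 * 1)
  linarith

theorem stmt8
    (g1 g2 : ℝ → ℝ)
    (hg1C : ContDiff ℝ 3 g1) (hg2C : ContDiff ℝ 3 g2)
    (hg1A : AnalyticAt ℝ g1 0) (hg2A : AnalyticAt ℝ g2 0)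
    (hg10 : g1 0 = 0) (hg20 : g2 0 = 0)
    (hg1d1 : ∀ x > 0, 0 < deriv g1 x) (hg2d1 : ∀ x > 0, 0 < deriv g2 x)
    (hg1d2 : ∀ x > 0, 0 < iteratedDeriv 2 g1 x) (hg2d2 : ∀ x > 0, 0 < iteratedDeriv 2 g2 x)
    (hg1d3 : ∀ x > 0, 0 ≤ iteratedDeriv 3 g1 x) (hg2d3 : ∀ x > 0, 0 ≤ iteratedDeriv 3 g2 x)
    (n : ℕ) (hn : 2 ≤ n) (h : ℝ) (hh : h = 1 / ((n : ℝ) - 1))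
    (u1 : ℝ) (hu1 : 0 < u1) (k : ℕ) (hk2 : 2 ≤ k) (hkn : k ≤ n) :
    0 < deriv (fun x => g1 (U g1 h k x) / g1 (U g1 h 1 x)) u1 :=
  stmt8_general g1 hg1C hg10 hg1d1 hg1d2 n hn h hh u1 hu1 k hk2
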